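/- For even n ≥ 4, m(n) ≤ (n+4) · 2^{n-3} + n · C(n-2, (n-2)/2)/2 + C(n, n/2)/2 + (n-2) · m(n-2). -/

import Mathlib

/-- A family of finsets is `n`-uniform if every hyperedge has `n` elements. -/
def IsUniform (n : ℕ) (E : Finset (Finset ℕ)) : Prop := ∀ e ∈ E, e.card = n

/-- A hypergraph (family of hyperedges) is 2-colorable if there is a Red/Blue
coloring of the vertices such that no hyperedge is monochromatic. -/
def Colorable2 (E : Finset (Finset ℕ)) : Prop :=
  ∃ χ : ℕ → Bool, ∀ e ∈ E, (∃ v ∈ e, χ v = true) ∧ (∃ v ∈ e, χ v = false)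

/-- `m n` is the least number of hyperedges in a non-2-colorable `n`-uniform hypergraph. -/
noncomputable def m (n : ℕ) : ℕ :=
  sInf {k | ∃ E : Finset (Finset ℕ), IsUniform n E ∧ ¬ Colorable2 E ∧ E.card = k}

/-- A hyperedge is monochromatic under `χ` if all its vertices get the same color. -/
def Mono (χ : ℕ → Bool) (s : Finset ℕ) : Prop :=
  (∀ x ∈ s, χ x = true) ∨ (∀ x ∈ s, χ x = false)

/-!
Let `r = n - 2` and let `F` be a non-2-colorable `r`-uniform hypergraph with `m r` edges. Add `r`
fresh pairs `{u'ᵢ, v'ᵢ}` and `n` fresh pairs `{uⱼ, vⱼ}`. For pairs `(u, v)` indexed by `Fin k` and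
`A ⊆ Fin k` let `T_A` take `u i` for `i ∈ A` and `v i` otherwise; `A` is admissible when
`|A| = k/2`, or `|A| > k/2` is even, or `|A| < k/2` is odd. The hypergraph consists of the edges
`e ∪ {u'ᵢ, v'ᵢ}` (`e ∈ F`), `T'_A ∪ {uⱼ, vⱼ}` (admissible `A ⊆ Fin r`) and `T_A` (admissible
`A ⊆ Fin n`).

Under any coloring some `e ∈ F` is monochromatic of color `c`. Either some pair `{u'ᵢ, v'ᵢ}` is
colored `c, c`, or the parity condition produces a monochromatic `T'_A`; one level up the same
argument applies to `T'_A`. An even `k`-set has `2^(k-1) + C(k, k/2)/2` admissible subsets, since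
off the middle layer exactly one of `A`, `Aᶜ` is admissible.
-/

open Finset

def Admissible (d k : ℕ) : Prop :=
  2 * k = d ∨ (k % 2 = 0 ∧ d < 2 * k) ∨ (k % 2 = 1 ∧ 2 * k < d)

instance (d k : ℕ) : Decidable (Admissible d k) := by unfold Admissible; infer_instance

def admissibleSets (d : ℕ) : Finset (Finset (Fin d)) := {A | Admissible d #A}

section Admissible

variable {d : ℕ}

@[simp]
lemma mem_admissibleSets {A : Finset (Fin d)} : A ∈ admissibleSets d ↔ Admissible d #A := by
  simp [admissibleSets]

lemma admissible_or_admissible_sub (hd : Even d) {k : ℕ} (hk : k ≤ d) :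
    Admissible d k ∨ Admissible d (d - k) := by
  obtain ⟨r, rfl⟩ := hd
  unfold Admissible
  omega

lemma admissible_or_admissible_pred (hd : Even d) {k : ℕ} (hk : 1 ≤ k) :
    Admissible d k ∨ Admissible d (k - 1) := by
  obtain ⟨r, rfl⟩ := hd
  unfold Admissible
  omega

lemma mem_admissibleSets_or_compl (hd : Even d) (A : Finset (Fin d)) :
    A ∈ admissibleSets d ∨ Aᶜ ∈ admissibleSets d := by
  simpa [card_compl] using
    admissible_or_admissible_sub hd (card_le_univ A |>.trans_eq (Fintype.card_fin d))

lemma mem_admissibleSets_or_erase (hd : Even d) {A : Finset (Fin d)} {i : Fin d} (hi : i ∈ A) :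
    A ∈ admissibleSets d ∨ A.erase i ∈ admissibleSets d := by
  simpa [card_erase_of_mem hi] using
    admissible_or_admissible_pred hd (card_pos.2 ⟨i, hi⟩)

lemma card_filter_two_mul_card_lt_eq_card_filter_lt_two_mul_card (d : ℕ) :
    #{A : Finset (Fin d) | 2 * #A < d} = #{A : Finset (Fin d) | d < 2 * #A} := by
  refine card_nbij' compl compl ?_ ?_ (fun A _ => compl_compl A) (fun A _ => compl_compl A) <;>
  · intro A hA
    have := card_le_univ A
    simp only [coe_filter, mem_univ, true_and, Set.mem_ofPred_eq, card_compl,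
      Fintype.card_fin] at this hA ⊢
    omega

lemma two_mul_card_filter_le_two_mul_card_eq (hd : Even d) :
    2 * #{A : Finset (Fin d) | d ≤ 2 * #A} = 2 ^ d + d.choose (d / 2) := by
  have hmiddle : #{A : Finset (Fin d) | #A = d / 2} = d.choose (d / 2) := by
    rw [← powerset_univ, ← powersetCard_eq_filter, card_powersetCard, card_univ, Fintype.card_fin]
  obtain ⟨r, rfl⟩ := hd
  have hupper : #{A : Finset (Fin (r + r)) | r + r ≤ 2 * #A} =
      #{A : Finset (Fin (r + r)) | r + r < 2 * #A} +
        #{A : Finset (Fin (r + r)) | #A = (r + r) / 2} := by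
    rw [← card_union_of_disjoint (disjoint_filter.2 fun _ _ _ => by omega), ← filter_or]
    exact congrArg card (filter_congr fun _ _ => by omega)
  have htotal : #{A : Finset (Fin (r + r)) | r + r ≤ 2 * #A} +
      #{A : Finset (Fin (r + r)) | 2 * #A < r + r} = 2 ^ (r + r) := by
    rw [← card_union_of_disjoint (disjoint_filter.2 fun _ _ _ => by omega), ← filter_or,
      filter_true_of_mem fun _ _ => by omega, card_univ, Fintype.card_finset, Fintype.card_fin]
  have := card_filter_two_mul_card_lt_eq_card_filter_lt_two_mul_card (r + r)
  omega

-- An admissible `A` with `2 * #A < d` has odd size, so `Aᶜ` has odd size `> d / 2`: the two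
-- branches cannot collide.
lemma injOn_ite_compl_admissibleSets (hd : Even d) :
    Set.InjOn (fun A => if 2 * #A < d then Aᶜ else A)
      (admissibleSets d : Set (Finset (Fin d))) := by
  intro A hA B hB hAB
  simp only [mem_coe, mem_admissibleSets] at hA hB
  have hA' := card_le_univ A
  have hB' := card_le_univ B
  rw [Fintype.card_fin] at hA' hB'
  obtain ⟨r, rfl⟩ := hd
  unfold Admissible at hA hB
  dsimp only at hAB
  split_ifs at hAB with hAlt hBlt hBlt
  · exact compl_injective hAB
  · have := congrArg card hAB
    rw [card_compl, Fintype.card_fin] at this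
    omega
  · have := congrArg card hAB
    rw [card_compl, Fintype.card_fin] at this
    omega
  · exact hAB

lemma card_admissibleSets_le (hd : Even d) :
    #(admissibleSets d) ≤ 2 ^ (d - 1) + d.choose (d / 2) / 2 := by
  have hinj : #(admissibleSets d) ≤ #{A : Finset (Fin d) | d ≤ 2 * #A} := by
    refine card_le_card_of_injOn (fun A => if 2 * #A < d then Aᶜ else A) ?_
      (injOn_ite_compl_admissibleSets hd)
    intro A _
    have := card_le_univ A
    simp only [Fintype.card_fin] at this
    simp only [coe_filter, mem_univ, true_and, Set.mem_ofPred_eq]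
    split_ifs <;> simp [card_compl] <;> omega
  have := two_mul_card_filter_le_two_mul_card_eq hd
  rcases Nat.eq_zero_or_pos d with rfl | hpos
  · simp_all
  · have : 2 ^ d = 2 * 2 ^ (d - 1) := by rw [← pow_succ']; congr 1; omega
    omega

end Admissible

lemma mono_iff_exists_forall_eq {χ : ℕ → Bool} {s : Finset ℕ} :
    Mono χ s ↔ ∃ c, ∀ x ∈ s, χ x = c := by
  refine ⟨fun h => h.elim (⟨true, ·⟩) (⟨false, ·⟩), fun ⟨c, h⟩ => ?_⟩
  cases c
  exacts [Or.inr h, Or.inl h]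

lemma not_colorable2_iff_forall_exists_mono {E : Finset (Finset ℕ)} :
    ¬ Colorable2 E ↔ ∀ χ : ℕ → Bool, ∃ e ∈ E, Mono χ e := by
  simp only [Colorable2, not_exists, not_forall, exists_prop]
  refine forall_congr' fun χ => exists_congr fun e => and_congr_right fun _ => ?_
  rw [Mono, or_comm, not_and_or]
  simp only [not_exists, not_and, Bool.not_eq_true, Bool.not_eq_false]

def transversal {k : ℕ} (u v : Fin k → ℕ) (A : Finset (Fin k)) : Finset ℕ :=
  A.image u ∪ Aᶜ.image v

def transversals {k : ℕ} (u v : Fin k → ℕ) : Finset (Finset ℕ) :=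
  (admissibleSets k).image (transversal u v)

def attachPairs {k : ℕ} (F : Finset (Finset ℕ)) (u v : Fin k → ℕ) : Finset (Finset ℕ) :=
  F.biUnion fun e => univ.image fun i => insert (u i) (insert (v i) e)

section Transversal

variable {k : ℕ} (u v : Fin k → ℕ) (χ : ℕ → Bool)

lemma mono_transversal {A : Finset (Fin k)} (b : Bool) (hA : ∀ i ∈ A, χ (u i) = b)
    (hAc : ∀ i ∉ A, χ (v i) = b) : Mono χ (transversal u v A) := by
  refine mono_iff_exists_forall_eq.2 ⟨b, fun x hx => ?_⟩
  simp only [transversal, mem_union, mem_image, mem_compl] at hx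
  obtain ⟨i, hi, rfl⟩ | ⟨i, hi, rfl⟩ := hx
  exacts [hA i hi, hAc i hi]

lemma exists_mem_admissibleSets_mono_transversal (hk : Even k) (c : Bool)
    (h : ∀ i, χ (u i) = c → χ (v i) ≠ c) :
    ∃ A ∈ admissibleSets k, Mono χ (transversal u v A) := by
  -- In each case two candidate sets with monochromatic transversals differ in size by one or are
  -- complementary, so by parity one of them is admissible.
  by_cases h₀ : ∃ i₀, χ (u i₀) ≠ c ∧ χ (v i₀) ≠ c
  · obtain ⟨i₀, hu₀, hv₀⟩ := h₀
    set A : Finset (Fin k) := {i | χ (u i) ≠ c}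
    have hu : ∀ i ∈ A, χ (u i) = !c := fun i hi => by simpa [A, Bool.eq_not_iff] using hi
    have hv : ∀ i ∉ A, χ (v i) = !c := fun i hi => by
      simp only [A, mem_filter, mem_univ, true_and, not_not] at hi
      exact Bool.eq_not_iff.2 (h i hi)
    have hi₀ : i₀ ∈ A := by simpa [A] using hu₀
    rcases mem_admissibleSets_or_erase hk hi₀ with hA | hA
    · exact ⟨A, hA, mono_transversal u v χ (!c) hu hv⟩
    · refine ⟨_, hA, mono_transversal u v χ (!c) (fun i hi => hu i (mem_of_mem_erase hi)) ?_⟩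
      intro i hi
      rcases eq_or_ne i i₀ with rfl | hne
      · exact Bool.eq_not_iff.2 hv₀
      · exact hv i fun hiA => hi (mem_erase.2 ⟨hne, hiA⟩)
  · push Not at h₀
    have hv : ∀ i, χ (v i) = !χ (u i) := fun i => by
      by_cases hi : χ (u i) = c
      · rw [hi, Bool.eq_not_iff]
        exact h i hi
      · rw [h₀ i hi, Bool.eq_not_iff]
        exact Ne.symm hi
    set A : Finset (Fin k) := {i | χ (u i) = false}
    rcases mem_admissibleSets_or_compl hk A with hA | hA
    · exact ⟨A, hA, mono_transversal u v χ false (fun i hi => by simpa [A] using hi)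
        (fun i hi => by simp_all [A])⟩
    · exact ⟨Aᶜ, hA, mono_transversal u v χ true (fun i hi => by simpa [A] using hi)
        (fun i hi => by simp_all [A])⟩

lemma exists_mono_attachPairs_union_transversals (hk : Even k) {F : Finset (Finset ℕ)}
    (hF : ∃ e ∈ F, Mono χ e) : ∃ e ∈ attachPairs F u v ∪ transversals u v, Mono χ e := by
  obtain ⟨e, he, c, hc⟩ : ∃ e ∈ F, ∃ c, ∀ x ∈ e, χ x = c := by
    simpa only [mono_iff_exists_forall_eq] using hF
  by_cases h : ∃ i, χ (u i) = c ∧ χ (v i) = c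
  · obtain ⟨i, hu, hv⟩ := h
    refine ⟨insert (u i) (insert (v i) e), mem_union_left _ ?_, mono_iff_exists_forall_eq.2 ⟨c, ?_⟩⟩
    · exact mem_biUnion.2 ⟨e, he, mem_image_of_mem _ (mem_univ i)⟩
    · simp only [mem_insert]
      rintro x (rfl | rfl | hx)
      exacts [hu, hv, hc x hx]
  · push Not at h
    obtain ⟨A, hA, hmono⟩ := exists_mem_admissibleSets_mono_transversal u v χ hk c h
    exact ⟨_, mem_union_right _ (mem_image_of_mem _ hA), hmono⟩

end Transversal

lemma IsUniform.union {r : ℕ} {E F : Finset (Finset ℕ)} (hE : IsUniform r E) (hF : IsUniform r F) :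
    IsUniform r (E ∪ F) := fun e he => (mem_union.1 he).elim (hE e) (hF e)

section Uniform

variable {k : ℕ} {u v : Fin k → ℕ}

lemma exists_eq_of_mem_transversal {A : Finset (Fin k)} {x : ℕ} (hx : x ∈ transversal u v A) :
    ∃ i, x = u i ∨ x = v i := by
  simp only [transversal, mem_union, mem_image] at hx
  obtain ⟨i, -, rfl⟩ | ⟨i, -, rfl⟩ := hx
  exacts [⟨i, .inl rfl⟩, ⟨i, .inr rfl⟩]

lemma card_transversal (hu : u.Injective) (hv : v.Injective) (huv : ∀ i j, u i ≠ v j)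
    (A : Finset (Fin k)) : #(transversal u v A) = k := by
  have hdisj : Disjoint (A.image u) (Aᶜ.image v) := by
    simp only [disjoint_left, mem_image]
    rintro _ ⟨i, -, rfl⟩ ⟨j, -, hj⟩
    exact huv i j hj.symm
  have := card_le_univ A
  rw [transversal, card_union_of_disjoint hdisj, card_image_of_injective _ hu,
    card_image_of_injective _ hv, card_compl, Fintype.card_fin] at *
  omega

lemma isUniform_transversals (hu : u.Injective) (hv : v.Injective) (huv : ∀ i j, u i ≠ v j) :
    IsUniform k (transversals u v) := by
  intro e he
  obtain ⟨A, -, rfl⟩ := mem_image.1 he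
  exact card_transversal hu hv huv A

lemma isUniform_attachPairs {r : ℕ} {F : Finset (Finset ℕ)} (hF : IsUniform r F)
    (huv : ∀ i, u i ≠ v i) (hu : ∀ e ∈ F, ∀ i, u i ∉ e) (hv : ∀ e ∈ F, ∀ i, v i ∉ e) :
    IsUniform (r + 2) (attachPairs F u v) := by
  intro s hs
  obtain ⟨e, he, i, -, rfl⟩ : ∃ e ∈ F, ∃ i ∈ univ, insert (u i) (insert (v i) e) = s := by
    simpa [attachPairs] using hs
  rw [card_insert_of_notMem (by simp [huv i, hu e he i]), card_insert_of_notMem (hv e he i),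
    hF e he]

lemma card_attachPairs_le (F : Finset (Finset ℕ)) (u v : Fin k → ℕ) :
    #(attachPairs F u v) ≤ #F * k :=
  card_biUnion_le_card_mul _ _ _ fun _ _ => card_image_le.trans_eq (card_fin k)

end Uniform

lemma exists_isUniform_not_colorable2 (k : ℕ) :
    ∃ E : Finset (Finset ℕ), IsUniform k E ∧ ¬ Colorable2 E := by
  refine ⟨powersetCard k (range (2 * k)), fun e he => (mem_powersetCard.1 he).2, ?_⟩
  rw [not_colorable2_iff_forall_exists_mono]
  intro χ
  obtain ⟨c, -, hc⟩ := exists_le_card_fiber_of_mul_le_card_of_maps_to (s := range (2 * k))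
    (t := univ) (f := χ) (n := k) (fun _ _ => mem_univ _) univ_nonempty (by simp)
  obtain ⟨e, he, hek⟩ := exists_subset_card_eq hc
  refine ⟨e, mem_powersetCard.2 ⟨he.trans (filter_subset _ _), hek⟩, ?_⟩
  exact mono_iff_exists_forall_eq.2 ⟨c, fun x hx => (mem_filter.1 (he hx)).2⟩

lemma exists_isUniform_not_colorable2_card_eq_m (k : ℕ) :
    ∃ E : Finset (Finset ℕ), IsUniform k E ∧ ¬ Colorable2 E ∧ #E = m k := by
  obtain ⟨E, hE, hEc⟩ := exists_isUniform_not_colorable2 k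
  exact Nat.sInf_mem (s := {k' | ∃ E : Finset (Finset ℕ), IsUniform k E ∧ ¬ Colorable2 E ∧ #E = k'})
    ⟨#E, E, hE, hEc, rfl⟩

lemma m_le_card {k : ℕ} {E : Finset (Finset ℕ)} (hE : IsUniform k E) (hEc : ¬ Colorable2 E) :
    m k ≤ #E :=
  Nat.sInf_le ⟨E, hE, hEc, rfl⟩

def twoLevelExtension {r s : ℕ} (F : Finset (Finset ℕ)) (u' v' : Fin r → ℕ) (u v : Fin s → ℕ) :
    Finset (Finset ℕ) :=
  attachPairs F u' v' ∪ (attachPairs (transversals u' v') u v ∪ transversals u v)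

section TwoLevelExtension

variable {r s : ℕ} (F : Finset (Finset ℕ)) (u' v' : Fin r → ℕ) (u v : Fin s → ℕ)

lemma not_colorable2_twoLevelExtension (hr : Even r) (hs : Even s) (hF : ¬ Colorable2 F) :
    ¬ Colorable2 (twoLevelExtension F u' v' u v) := by
  rw [twoLevelExtension]
  rw [not_colorable2_iff_forall_exists_mono] at hF ⊢
  intro χ
  obtain ⟨e, he, hmono⟩ := exists_mono_attachPairs_union_transversals u' v' χ hr (hF χ)
  rcases mem_union.1 he with he | he
  · exact ⟨e, mem_union_left _ he, hmono⟩
  · obtain ⟨e', he', hmono'⟩ := exists_mono_attachPairs_union_transversals u v χ hs ⟨e, he, hmono⟩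
    exact ⟨e', mem_union_right _ he', hmono'⟩

lemma card_twoLevelExtension_le :
    #(twoLevelExtension F u' v' u v) ≤ #F * r + #(admissibleSets r) * s + #(admissibleSets s) := by
  calc _ ≤ #(attachPairs F u' v') +
        (#(attachPairs (transversals u' v') u v) + #(transversals u v)) :=
        (card_union_le _ _).trans (Nat.add_le_add_left (card_union_le _ _) _)
    _ ≤ #F * r + (#(transversals u' v') * s + #(transversals u v)) := by
        gcongr <;> apply card_attachPairs_le
    _ ≤ _ := by
        rw [← add_assoc]
        gcongr <;> exact card_image_le

end TwoLevelExtension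

theorem exists_isUniform_add_two_not_colorable2 {r : ℕ} (hr : Even r) {F : Finset (Finset ℕ)}
    (hF : IsUniform r F) (hFc : ¬ Colorable2 F) :
    ∃ H : Finset (Finset ℕ), IsUniform (r + 2) H ∧ ¬ Colorable2 H ∧
      #H ≤ #F * r + #(admissibleSets r) * (r + 2) + #(admissibleSets (r + 2)) := by
  set B := (F.biUnion id).sup id + 1
  have hB : ∀ e ∈ F, ∀ x ∈ e, x < B := fun e he x hx =>
    Nat.lt_succ_of_le (le_sup (f := id) (mem_biUnion.2 ⟨e, he, hx⟩))
  let u' : Fin r → ℕ := fun i => B + i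
  let v' : Fin r → ℕ := fun i => B + r + i
  let u : Fin (r + 2) → ℕ := fun j => B + 2 * r + j
  let v : Fin (r + 2) → ℕ := fun j => B + 3 * r + 2 + j
  have hT' : ∀ s ∈ transversals u' v', ∀ x ∈ s, x < B + 2 * r := by
    intro s hs x hx
    obtain ⟨A, -, rfl⟩ := mem_image.1 hs
    obtain ⟨i, rfl | rfl⟩ := exists_eq_of_mem_transversal hx <;> simp only [u', v'] <;> omega
  have hT'unif : IsUniform r (transversals u' v') :=
    isUniform_transversals (fun _ _ h => Fin.ext (by simpa [u'] using h))
      (fun _ _ h => Fin.ext (by simpa [v'] using h)) (fun i j => by simp only [u', v']; omega)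
  have hTunif : IsUniform (r + 2) (transversals u v) :=
    isUniform_transversals (fun _ _ h => Fin.ext (by simpa [u] using h))
      (fun _ _ h => Fin.ext (by simpa [v] using h)) (fun i j => by simp only [u, v]; omega)
  refine ⟨_, ?_, not_colorable2_twoLevelExtension F u' v' u v hr (by simpa [Nat.even_add] using hr)
    hFc, card_twoLevelExtension_le F u' v' u v⟩
  refine (isUniform_attachPairs hF ?_ ?_ ?_).union
    ((isUniform_attachPairs hT'unif ?_ ?_ ?_).union hTunif)
  · exact fun i => by simp only [u', v']; omega
  · exact fun e he i hi => by have := hB e he _ hi; simp only [u'] at this; omega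
  · exact fun e he i hi => by have := hB e he _ hi; simp only [v'] at this; omega
  · exact fun j => by simp only [u, v]; omega
  · exact fun s hs j hj => by have := hT' s hs _ hj; simp only [u] at this; omega
  · exact fun s hs j hj => by have := hT' s hs _ hj; simp only [v] at this; omega

/-- Second improved recurrence (even case): for even `n ≥ 4`,
`m n ≤ (n+4)·2^(n-3) + n·C(n-2,(n-2)/2)/2 + C(n,n/2)/2 + (n-2)·m(n-2)`. -/
theorem second_improvement_even (n : ℕ) (hn : 4 ≤ n) (heven : Even n) :
    m n ≤ (n + 4) * 2 ^ (n - 3) + n * (Nat.choose (n - 2) ((n - 2) / 2) / 2)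
      + Nat.choose n (n / 2) / 2 + (n - 2) * m (n - 2) := by
  obtain ⟨r, rfl⟩ : ∃ r, n = r + 2 := ⟨n - 2, by omega⟩
  have hr : Even r := by simpa [Nat.even_add] using heven
  obtain ⟨F, hF, hFc, hFm⟩ := exists_isUniform_not_colorable2_card_eq_m r
  obtain ⟨H, hH, hHc, hHcard⟩ := exists_isUniform_add_two_not_colorable2 hr hF hFc
  have hlow := card_admissibleSets_le hr
  have hhigh := card_admissibleSets_le heven
  have hpow : 2 ^ (r + 2 - 1) = 4 * 2 ^ (r - 1) := by
    rw [show r + 2 - 1 = r - 1 + 2 by omega, pow_add]; ring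
  simp only [Nat.add_sub_cancel, show r + 2 - 3 = r - 1 by omega, hpow] at hhigh ⊢
  calc m (r + 2) ≤ #H := m_le_card hH hHc
    _ ≤ #F * r + (2 ^ (r - 1) + r.choose (r / 2) / 2) * (r + 2)
        + (4 * 2 ^ (r - 1) + (r + 2).choose ((r + 2) / 2) / 2) := by
      refine hHcard.trans ?_
      gcongr
    _ = _ := by rw [hFm]; ring
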